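/- arXiv:2111.00461 — 2 statements merged into one kernel-verified Lean document; each statement's English description precedes it below -/
import Mathlib

section
/- Let X be a metric space, Y a real Banach space, C ⊆ Y a closed convex cone, f : X → Y a mapping, and R ⊆ X a nonempty closed set. Define ν : R → [0,+∞] by ν(x) = exc(f(R) − f(x), C) = exc(f(R), f(x) + C). If f is C-lower semicontinuous at a point x̄ ∈ R, then ν is lower semicontinuous at x̄ (with respect to the topology induced on R), i.e. for every sequence (xₙ) in R converging to x̄ one has liminf_{n→∞} ν(xₙ) ≥ ν(x̄). -/
open Set Metric Filter Topology Pointwise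
open scoped ENNReal NNReal

noncomputable section

/-- The excess of `A` over `B`: `exc A B = sup_{a ∈ A} dist (a, B)`,
computed in `ℝ≥0∞` so that the convention `dist (y, ∅) = +∞` holds. -/
def exc {Y : Type*} [PseudoEMetricSpace Y] (A B : Set Y) : ℝ≥0∞ :=
  ⨆ a ∈ A, EMetric.infEdist a B

/-!
If `f x ∈ B(f x̄, ε) + C`, write `f x = b + c`. For every `z`,
`f z - f x̄ = (f z - f x + c) + (b - f x̄)`, and translating by `c ∈ C` does not increase the
distance to the cone `C` (because `C + C ⊆ C`), so `dist (f z - f x̄, C) ≤ dist (f z - f x, C) + ε`.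
Taking the supremum over `z ∈ R` gives `ν x̄ ≤ ν x + ε` near `x̄`, which is lower semicontinuity.
-/

theorem Convex.add_mem_of_smul_mem {𝕜 E : Type*} [Field 𝕜] [LinearOrder 𝕜]
    [IsStrictOrderedRing 𝕜] [AddCommGroup E] [Module 𝕜 E] {C : Set E} (hconv : Convex 𝕜 C)
    (hcone : ∀ c ∈ C, ∀ t : 𝕜, 0 ≤ t → t • c ∈ C) {x y : E} (hx : x ∈ C) (hy : y ∈ C) :
    x + y ∈ C := by
  have hmid : (1 / 2 : 𝕜) • x + (1 / 2 : 𝕜) • y ∈ C :=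
    hconv hx hy (by positivity) (by positivity) (add_halves 1)
  simpa [smul_add, smul_smul] using hcone _ hmid 2 zero_le_two

theorem exc_image_le_iff {α Y : Type*} [PseudoEMetricSpace Y] {g : α → Y} {s : Set α}
    {B : Set Y} {r : ℝ≥0∞} : exc (g '' s) B ≤ r ↔ ∀ z ∈ s, infEDist (g z) B ≤ r := by
  change (⨆ a ∈ g '' s, infEDist a B) ≤ r ↔ _
  simp only [iSup₂_le_iff, forall_mem_image]

theorem infEDist_le_exc {Y : Type*} [PseudoEMetricSpace Y] {A B : Set Y} {a : Y} (ha : a ∈ A) :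
    infEDist a B ≤ exc A B :=
  le_iSup₂ (f := fun a (_ : a ∈ A) => infEDist a B) a ha

section Translation

variable {Y : Type*} [SeminormedAddCommGroup Y] {C : Set Y}

theorem infEDist_add_le_of_forall_add_mem {c : Y} (hc : ∀ y ∈ C, y + c ∈ C) (w : Y) :
    infEDist (w + c) C ≤ infEDist w C :=
  le_infEDist.2 fun y hy =>
    (infEDist_le_edist_of_mem (hc y hy)).trans_eq (edist_add_right w y c)

theorem infEDist_sub_le_of_mem_closedBall_add (hC : ∀ x ∈ C, ∀ y ∈ C, x + y ∈ C)
    {y₀ y : Y} {ε : ℝ≥0} (hy : y ∈ closedBall y₀ ε + C) (a : Y) :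
    infEDist (a - y₀) C ≤ infEDist (a - y) C + ε := by
  obtain ⟨b, hb, c, hc, rfl⟩ := hy
  have hb' : edist b y₀ ≤ ε := by
    rw [edist_dist]
    exact ENNReal.ofReal_le_of_le_toReal (mem_closedBall.1 hb)
  calc infEDist (a - y₀) C
      ≤ infEDist (a - (b + c) + c) C + edist (a - y₀) (a - (b + c) + c) :=
        infEDist_le_infEDist_add_edist
    _ = infEDist (a - (b + c) + c) C + edist b y₀ := by
        rw [sub_add_eq_sub_sub, sub_add_cancel, edist_sub_left, edist_comm]
    _ ≤ infEDist (a - (b + c)) C + ε :=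
        add_le_add (infEDist_add_le_of_forall_add_mem (fun x hx => hC x hx c hc) _) hb'

theorem exc_image_sub_le_of_mem_closedBall_add (hC : ∀ x ∈ C, ∀ y ∈ C, x + y ∈ C)
    {y₀ y : Y} {ε : ℝ≥0} (hy : y ∈ closedBall y₀ ε + C) {α : Type*} (g : α → Y) (s : Set α) :
    exc ((fun z => g z - y₀) '' s) C ≤ exc ((fun z => g z - y) '' s) C + ε :=
  exc_image_le_iff.2 fun z hz =>
    (infEDist_sub_le_of_mem_closedBall_add hC hy (g z)).trans
      (add_le_add_left (infEDist_le_exc (mem_image_of_mem _ hz)) _)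

end Translation

theorem ENNReal.lowerSemicontinuousAt_of_forall_pos {X : Type*} [TopologicalSpace X]
    {ν : X → ℝ≥0∞} {x₀ : X} (h : ∀ ε : ℝ≥0, 0 < ε → ∀ᶠ x in 𝓝 x₀, ν x₀ ≤ ν x + ε) :
    LowerSemicontinuousAt ν x₀ := by
  intro y hy
  obtain ⟨ε, hε, hlt⟩ := ENNReal.lt_iff_exists_add_pos_lt.1 hy
  filter_upwards [h ε hε] with x hx
  exact (ENNReal.add_lt_add_iff_right ENNReal.coe_ne_top).1 (hlt.trans_le hx)

theorem nu_lsc_of_Clsc_general {X Y : Type*} [MetricSpace X]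
    [NormedAddCommGroup Y] [NormedSpace ℝ Y]
    (C : Set Y) (hCconv : Convex ℝ C)
    (hCcone : ∀ c ∈ C, ∀ t : ℝ, 0 ≤ t → t • c ∈ C)
    (f : X → Y) (R : Set X)
    (xb : X)
    (hClsc : ∀ ε > (0 : ℝ), ∃ δ > (0 : ℝ), ∀ x ∈ Metric.closedBall xb δ,
      f x ∈ Metric.closedBall (f xb) ε + C) :
    ∀ u : ℕ → X, (∀ n, u n ∈ R) → Tendsto u atTop (𝓝 xb) →
      exc ((fun z => f z - f xb) '' R) C ≤
        Filter.liminf (fun n => exc ((fun z => f z - f (u n)) '' R) C) atTop := by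
  intro u _ hu
  have hadd : ∀ x ∈ C, ∀ y ∈ C, x + y ∈ C := fun _ hx _ hy =>
    hCconv.add_mem_of_smul_mem hCcone hx hy
  have hlsc : LowerSemicontinuousAt (fun x => exc ((fun z => f z - f x) '' R) C) xb := by
    refine ENNReal.lowerSemicontinuousAt_of_forall_pos fun ε hε => ?_
    obtain ⟨δ, hδ, hball⟩ := hClsc ε hε
    filter_upwards [closedBall_mem_nhds xb hδ] with x hx
    exact exc_image_sub_le_of_mem_closedBall_add hadd (hball x hx) f R
  exact hlsc.le_liminf.trans hu.liminf_le_liminf_comp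

/-- if `f` is `C`-lower semicontinuous at `xb ∈ R`, then
`ν(x) = exc (f(R) − f(x), C)` is lower semicontinuous at `xb` relative to `R`:
for every sequence `(xₙ)` in `R` converging to `xb`, `liminf ν(xₙ) ≥ ν(xb)`. -/
theorem nu_lsc_of_Clsc {X Y : Type*} [MetricSpace X]
    [NormedAddCommGroup Y] [NormedSpace ℝ Y] [CompleteSpace Y]
    (C : Set Y) (hCclosed : IsClosed C) (hCconv : Convex ℝ C)
    (hCcone : ∀ c ∈ C, ∀ t : ℝ, 0 ≤ t → t • c ∈ C)
    (f : X → Y) (R : Set X) (hRne : R.Nonempty) (hRcl : IsClosed R)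
    (xb : X) (hxb : xb ∈ R)
    (hClsc : ∀ ε > (0 : ℝ), ∃ δ > (0 : ℝ), ∀ x ∈ Metric.closedBall xb δ,
      f x ∈ Metric.closedBall (f xb) ε + C) :
    ∀ u : ℕ → X, (∀ n, u n ∈ R) → Tendsto u atTop (𝓝 xb) →
      exc ((fun z => f z - f xb) '' R) C ≤
        Filter.liminf (fun n => exc ((fun z => f z - f (u n)) '' R) C) atTop :=
  nu_lsc_of_Clsc_general C hCconv hCcone f R xb hClsc

end
end

section
/- Let X be a metric space and let φ, ψ : X → ℝ ∪ {±∞} with x₀ ∈ dom φ ∩ dom ψ. If x₀ is not a local minimizer of φ, ψ is calm at x₀, and c_ψ > clm ψ(x₀), then the strong slope of φ + ψ at x₀ satisfies |∇(φ+ψ)|(x₀) ≥ max{ |∇φ|(x₀) − c_ψ, 0 }. -/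
/-!
Whether or not `x₀` is a local minimizer, the strong slope equals `max (limsup q) 0`, where
`q x = (φ x₀ - φ x) / d(x, x₀)` is the difference quotient. Calmness of `ψ` with a constant
`ℓ < c_ψ` gives `ψ x - ψ x₀ ≤ ℓ d(x, x₀)` near `x₀`, hence `q_φ ≤ q_{φ+ψ} + ℓ` pointwise and
`limsup q_φ ≤ limsup q_{φ+ψ} + c_ψ`; as `c_ψ ≥ 0`, taking positive parts gives the claim.
-/

open Set Metric Filter Topology
open scoped ENNReal NNReal Classical

noncomputable section

/-- The strong slope of an extended-real-valued function `φ` at `x₀`: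
`0` if `x₀` is a local minimizer of `φ`, and
`limsup_{x→x₀} (φ(x₀) − φ(x))/d(x,x₀)` otherwise. -/
def stslope {X : Type*} [MetricSpace X] (φ : X → EReal) (x₀ : X) : EReal :=
  if IsLocalMin φ x₀ then 0
  else Filter.limsup (fun x => (φ x₀ - φ x) / ((dist x x₀ : ℝ) : EReal)) (𝓝[≠] x₀)

/-- `ψ` is calm at `x₀` with constant `ℓ` on the ball of radius `δ`:
`|ψ(x) − ψ(x₀)| ≤ ℓ d(x, x₀)` there (formulated by the two one-sided
inequalities so as to make sense for extended-real values). -/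
def CalmWithE {X : Type*} [MetricSpace X] (ψ : X → EReal) (x₀ : X) (ℓ δ : ℝ) : Prop :=
  ∀ x ∈ Metric.closedBall x₀ δ,
    ψ x - ψ x₀ ≤ ((ℓ * dist x x₀ : ℝ) : EReal) ∧
    ψ x₀ - ψ x ≤ ((ℓ * dist x x₀ : ℝ) : EReal)

/-- The modulus of calmness `clm ψ (x₀)`. -/
def clmE {X : Type*} [MetricSpace X] (ψ : X → EReal) (x₀ : X) : ℝ :=
  sInf {ℓ : ℝ | 0 < ℓ ∧ ∃ δ > (0 : ℝ), CalmWithE ψ x₀ ℓ δ}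

def slopeQuotient {X : Type*} [MetricSpace X] (φ : X → EReal) (x₀ x : X) : EReal :=
  (φ x₀ - φ x) / ((dist x x₀ : ℝ) : EReal)

lemma EReal.limsup_add_coe_le {α : Type*} (u : α → EReal) (f : Filter α) (c : ℝ) :
    limsup (fun x => u x + c) f ≤ limsup u f + c := by
  rcases f.eq_or_neBot with rfl | hf
  · simp
  have := EReal.limsup_add_le (u := u) (v := fun _ => (c : EReal)) (f := f)
    (.inr (by simp)) (.inr (by simp))
  rwa [limsup_const] at this

section
variable {X : Type*} [MetricSpace X] {φ ψ : X → EReal} {x₀ x : X} {ℓ δ : ℝ}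

lemma slopeQuotient_nonpos_of_le (h : φ x₀ ≤ φ x) : slopeQuotient φ x₀ x ≤ 0 :=
  EReal.div_nonpos_of_nonpos_of_nonneg (EReal.sub_nonpos.2 h) (EReal.coe_nonneg.2 dist_nonneg)

lemma slopeQuotient_nonneg_of_lt (h : φ x < φ x₀) : 0 ≤ slopeQuotient φ x₀ x :=
  EReal.div_nonneg (EReal.sub_pos.2 h).le (EReal.coe_nonneg.2 dist_nonneg)

theorem stslope_eq_max_limsup_slopeQuotient (φ : X → EReal) (x₀ : X) :
    stslope φ x₀ = max (limsup (slopeQuotient φ x₀) (𝓝[≠] x₀)) 0 := by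
  unfold stslope
  split_ifs with hmin
  · refine (max_eq_right (limsup_le_of_le (by isBoundedDefault) ?_)).symm
    exact (hmin.filter_mono nhdsWithin_le_nhds).mono fun x hx => slopeQuotient_nonpos_of_le hx
  · refine (max_eq_left (le_limsup_of_frequently_le' ?_)).symm
    have hlt : ∃ᶠ x in 𝓝 x₀, φ x < φ x₀ := by simpa [IsLocalMin, IsMinFilter] using hmin
    refine frequently_nhdsWithin_iff.2 (hlt.mono fun x hx => ⟨slopeQuotient_nonneg_of_lt hx, ?_⟩)
    exact fun h => hx.ne (congrArg φ h)

lemma slopeQuotient_le_slopeQuotient_add (hψtop : ψ x₀ ≠ ⊤) (hψbot : ψ x₀ ≠ ⊥) (hx : x ≠ x₀)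
    (hψ : ψ x - ψ x₀ ≤ ((ℓ * dist x x₀ : ℝ) : EReal)) :
    slopeQuotient φ x₀ x ≤ slopeQuotient (φ + ψ) x₀ x + ℓ := by
  obtain ⟨b, hb⟩ : ∃ b : ℝ, ψ x₀ = b := ⟨_, (EReal.coe_toReal hψtop hψbot).symm⟩
  have hd : 0 < dist x x₀ := dist_pos.2 hx
  have hd' : (0 : EReal) < (dist x x₀ : ℝ) := by exact_mod_cast hd
  simp only [slopeQuotient, Pi.add_apply, hb] at hψ ⊢
  generalize dist x x₀ = d at hd hd' hψ ⊢
  generalize φ x₀ = a, φ x = y, ψ x = z at hψ ⊢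
  induction a using EReal.rec <;> induction y using EReal.rec <;> induction z using EReal.rec <;>
    simp_all [EReal.top_div_of_pos_ne_top, EReal.bot_div_of_pos_ne_top, ← EReal.coe_sub,
      ← EReal.coe_add, ← EReal.coe_div, -EReal.coe_mul]
  rename_i a y z
  have hcalm : (z - b) / d ≤ ℓ := (div_le_iff₀ hd).2 (by linarith)
  have hsplit : (a + b - (y + z)) / d = (a - y) / d - (z - b) / d := by ring
  linarith

theorem limsup_slopeQuotient_le_limsup_slopeQuotient_add (hψtop : ψ x₀ ≠ ⊤) (hψbot : ψ x₀ ≠ ⊥)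
    (hψ : ∀ᶠ x in 𝓝 x₀, ψ x - ψ x₀ ≤ ((ℓ * dist x x₀ : ℝ) : EReal)) :
    limsup (slopeQuotient φ x₀) (𝓝[≠] x₀) ≤ limsup (slopeQuotient (φ + ψ) x₀) (𝓝[≠] x₀) + ℓ := by
  refine (limsup_le_limsup ?_).trans (EReal.limsup_add_coe_le _ _ _)
  filter_upwards [hψ.filter_mono nhdsWithin_le_nhds, self_mem_nhdsWithin] with x hx hne
  exact slopeQuotient_le_slopeQuotient_add hψtop hψbot hne hx

lemma CalmWithE.eventually_sub_le (h : CalmWithE ψ x₀ ℓ δ) (hδ : 0 < δ) :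
    ∀ᶠ x in 𝓝 x₀, ψ x - ψ x₀ ≤ ((ℓ * dist x x₀ : ℝ) : EReal) :=
  eventually_of_mem (closedBall_mem_nhds x₀ hδ) fun x hx => (h x hx).1

lemma exists_calmWithE_of_clmE_lt (hcalm : ∃ ℓ > (0 : ℝ), ∃ δ > (0 : ℝ), CalmWithE ψ x₀ ℓ δ)
    {c : ℝ} (hc : clmE ψ x₀ < c) : ∃ ℓ, 0 < ℓ ∧ ℓ < c ∧ ∃ δ > 0, CalmWithE ψ x₀ ℓ δ := by
  obtain ⟨ℓ, ⟨hℓ, hcalm⟩, hℓc⟩ := exists_lt_of_csInf_lt hcalm hc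
  exact ⟨ℓ, hℓ, hℓc, hcalm⟩

end

theorem stslope_add_calm_general {X : Type*} [MetricSpace X]
    (φ ψ : X → EReal) (x₀ : X)
    (hψtop : ψ x₀ ≠ ⊤) (hψbot : ψ x₀ ≠ ⊥)
    (hcalm : ∃ ℓ > (0 : ℝ), ∃ δ > (0 : ℝ), CalmWithE ψ x₀ ℓ δ)
    (cψ : ℝ) (hc : clmE ψ x₀ < cψ) :
    max (stslope φ x₀ - (cψ : EReal)) 0 ≤ stslope (fun x => φ x + ψ x) x₀ := by
  obtain ⟨ℓ, hℓ, hℓc, δ, hδ, hψ⟩ := exists_calmWithE_of_clmE_lt hcalm hc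
  have hc₀ : (0 : EReal) ≤ cψ := by exact_mod_cast (hℓ.trans hℓc).le
  have key : limsup (slopeQuotient φ x₀) (𝓝[≠] x₀)
      ≤ limsup (slopeQuotient (φ + ψ) x₀) (𝓝[≠] x₀) + cψ :=
    (limsup_slopeQuotient_le_limsup_slopeQuotient_add hψtop hψbot
      (hψ.eventually_sub_le hδ)).trans (by gcongr)
  rw [stslope_eq_max_limsup_slopeQuotient, stslope_eq_max_limsup_slopeQuotient]
  refine max_le (EReal.sub_le_of_le_add (max_le ?_ ?_)) (le_max_right _ _)
  · exact key.trans (by gcongr; exact le_max_left _ _)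
  · exact add_nonneg (le_max_right _ _) hc₀

/-- calm perturbation of the slope: if `x₀ ∈ dom φ ∩ dom ψ` is not a
local minimizer of `φ`, `ψ` is calm at `x₀` and `c_ψ > clm ψ (x₀)`, then
`|∇(φ+ψ)|(x₀) ≥ max (|∇φ|(x₀) − c_ψ) 0`. -/
theorem stslope_add_calm {X : Type*} [MetricSpace X]
    (φ ψ : X → EReal) (x₀ : X)
    (hφtop : φ x₀ ≠ ⊤) (hφbot : φ x₀ ≠ ⊥)
    (hψtop : ψ x₀ ≠ ⊤) (hψbot : ψ x₀ ≠ ⊥)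
    (hmin : ¬ IsLocalMin φ x₀)
    (hcalm : ∃ ℓ > (0 : ℝ), ∃ δ > (0 : ℝ), CalmWithE ψ x₀ ℓ δ)
    (cψ : ℝ) (hc : clmE ψ x₀ < cψ) :
    max (stslope φ x₀ - (cψ : EReal)) 0 ≤ stslope (fun x => φ x + ψ x) x₀ :=
  stslope_add_calm_general φ ψ x₀ hψtop hψbot hcalm cψ hc

end
end
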